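/- Let K be a compact Hausdorff topological group. The formula [t, k₁, k₂] · k = [t, k₁, k₂ k] defines a well-defined, continuous, free right action of K on D; the map p: D → (ℝ/ℤ) × K sending [t, k₁, k₂] to ([t], k₁) is well defined, continuous, surjective, and invariant under this action; and the induced map from the orbit space D/K to (ℝ/ℤ) × K is a homeomorphism. (This exhibits D as a principal K-bundle over S¹ × K.) -/

import Mathlib

/-- The action of `λ ∈ ℤ` on `ℝ × K × K` given by
`λ · (t, k₁, k₂) = (t + λ, k₁, k₁^λ k₂)`. -/
def zAct (K : Type*) [Group K] (n : ℤ) (x : ℝ × K × K) : ℝ × K × K :=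
  (x.1 + n, x.2.1, x.2.1 ^ n * x.2.2)

/-- The bundle `D = (ℝ × K × K)/ℤ`. -/
abbrev bundleD (K : Type*) [Group K] : Type _ :=
  Quot (fun x y : ℝ × K × K => ∃ n : ℤ, zAct K n x = y)

/-!
The ℤ-action on `ℝ × K × K` commutes with right multiplication on the last factor and moves
`t` by integers while fixing `k₁`, so both the `K`-action and `p` descend to `D`. Two points over
the same `([t], k₁)` have first coordinates differing by some `n ∈ ℤ`, and acting by `n` absorbs
that shift into the last coordinate, so the fibres of `p` are exactly the `K`-orbits. Since `D` is
the image of the compact set `[0, 1] × K × K`, the induced continuous bijection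
`D/K → (ℝ/ℤ) × K` onto a Hausdorff space is a homeomorphism.
-/

section OrbitQuot

open scoped Pointwise

variable {G X : Type*} [AddGroup G] [AddAction G X]

theorem equivalence_exists_vadd_eq : Equivalence (fun x y : X => ∃ g : G, g +ᵥ x = y) where
  refl x := ⟨0, zero_vadd G x⟩
  symm := by
    rintro x _ ⟨g, rfl⟩
    exact ⟨-g, neg_vadd_vadd g x⟩
  trans := by
    rintro x _ _ ⟨g, rfl⟩ ⟨h, rfl⟩
    exact ⟨h + g, add_vadd h g x⟩

theorem quot_mk_eq_mk_iff_exists_vadd_eq {x y : X} :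
    Quot.mk (fun x y : X => ∃ g : G, g +ᵥ x = y) x = Quot.mk _ y ↔ ∃ g : G, g +ᵥ x = y :=
  ⟨fun h => equivalence_exists_vadd_eq.eqvGen_iff.mp (Quot.eqvGen_exact h), fun h => Quot.sound h⟩

theorem isOpenQuotientMap_quot_mk_exists_vadd_eq [TopologicalSpace X] [ContinuousConstVAdd G X] :
    IsOpenQuotientMap (Quot.mk (fun x y : X => ∃ g : G, g +ᵥ x = y)) := by
  refine ⟨Quot.mk_surjective, continuous_quot_mk, fun U hU => ?_⟩
  rw [isOpen_coinduced]
  convert isOpen_iUnion fun g : G => hU.vadd g using 1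
  ext x
  simp only [Set.mem_preimage, Set.mem_image, quot_mk_eq_mk_iff_exists_vadd_eq, Set.mem_iUnion,
    Set.mem_vadd_set]
  exact ⟨fun ⟨u, hu, g, hg⟩ => ⟨g, u, hu, hg⟩, fun ⟨g, u, hu, hg⟩ => ⟨u, hu, g, hg⟩⟩

end OrbitQuot

theorem exists_homeomorph_quot_of_fiber_iff {X Y : Type*} [TopologicalSpace X] [CompactSpace X]
    [TopologicalSpace Y] [T2Space Y] {r : X → X → Prop} {f : X → Y} (hf : Continuous f)
    (hsurj : Function.Surjective f) (hfiber : ∀ x y, f x = f y ↔ r x y) :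
    ∃ h : Quot r ≃ₜ Y, ∀ x, h (Quot.mk r x) = f x := by
  let f' : Quot r → Y := Quot.lift f fun x y hxy => (hfiber x y).mpr hxy
  have hinj : Function.Injective f' := fun a b =>
    Quot.induction_on₂ a b fun x y hxy => Quot.sound ((hfiber x y).mp hxy)
  have hsurj' : Function.Surjective f' := fun y =>
    let ⟨x, hx⟩ := hsurj y
    ⟨Quot.mk r x, hx⟩
  have hhomeo : IsHomeomorph f' :=
    isHomeomorph_iff_continuous_bijective.mpr ⟨continuous_quot_lift _ hf, hinj, hsurj'⟩
  exact ⟨hhomeo.homeomorph, fun _ => rfl⟩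

theorem UnitAddCircle.coe_eq_coe_iff {s t : ℝ} :
    (s : UnitAddCircle) = t ↔ ∃ n : ℤ, s + n = t := by
  simp only [QuotientAddGroup.eq, AddSubgroup.mem_zmultiples_iff, zsmul_one]
  exact exists_congr fun n => by constructor <;> intro h <;> linarith

section ZAct

variable {K : Type*} [Group K]

theorem zAct_zero (x : ℝ × K × K) : zAct K 0 x = x := by
  simp [zAct]

theorem zAct_add (m n : ℤ) (x : ℝ × K × K) : zAct K (m + n) x = zAct K m (zAct K n x) := by
  simp only [zAct, Int.cast_add, zpow_add, mul_assoc, Prod.mk.injEq, and_true]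
  ring

theorem continuous_zAct [TopologicalSpace K] [IsTopologicalGroup K] (n : ℤ) :
    Continuous (zAct K n) := by
  unfold zAct
  fun_prop

abbrev zAddAction : AddAction ℤ (ℝ × K × K) where
  vadd := zAct K
  zero_vadd := zAct_zero
  add_vadd := zAct_add

end ZAct

namespace bundleD

variable {K : Type*} [Group K]

theorem mk_eq_mk_iff {x y : ℝ × K × K} :
    (Quot.mk _ x : bundleD K) = Quot.mk _ y ↔ ∃ n : ℤ, zAct K n x = y :=
  letI := zAddAction (K := K)
  quot_mk_eq_mk_iff_exists_vadd_eq

theorem isOpenQuotientMap_mk [TopologicalSpace K] [IsTopologicalGroup K] :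
    IsOpenQuotientMap (Quot.mk _ : ℝ × K × K → bundleD K) :=
  letI := zAddAction (K := K)
  haveI : ContinuousConstVAdd ℤ (ℝ × K × K) := ⟨continuous_zAct⟩
  isOpenQuotientMap_quot_mk_exists_vadd_eq

def act (d : bundleD K) (k : K) : bundleD K :=
  Quot.map (fun x => (x.1, x.2.1, x.2.2 * k))
    (by rintro x _ ⟨n, rfl⟩; exact ⟨n, by simp [zAct, mul_assoc]⟩) d

theorem act_mk (t : ℝ) (k₁ k₂ k : K) :
    act (Quot.mk _ (t, k₁, k₂)) k = Quot.mk _ (t, k₁, k₂ * k) :=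
  rfl

theorem act_one (d : bundleD K) : act d 1 = d := by
  rcases d with ⟨t, k₁, k₂⟩
  rw [act_mk, mul_one]

theorem act_act (d : bundleD K) (k k' : K) : act (act d k) k' = act d (k * k') := by
  rcases d with ⟨t, k₁, k₂⟩
  rw [act_mk, act_mk, act_mk, mul_assoc]

theorem eq_one_of_act_eq {d : bundleD K} {k : K} (h : act d k = d) : k = 1 := by
  rcases d with ⟨t, k₁, k₂⟩
  obtain ⟨n, hn⟩ := mk_eq_mk_iff.mp ((act_mk t k₁ k₂ k).symm.trans h)
  simp only [zAct, Prod.mk.injEq, add_eq_left, Int.cast_eq_zero] at hn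
  obtain ⟨rfl, -, hk⟩ := hn
  simpa using hk

theorem continuous_act [TopologicalSpace K] [IsTopologicalGroup K] :
    Continuous fun z : bundleD K × K => act z.1 z.2 := by
  rw [← (isOpenQuotientMap_mk.prodMap .id).continuous_comp_iff]
  exact continuous_quot_mk.comp (by fun_prop)

def proj : bundleD K → UnitAddCircle × K :=
  Quot.lift (fun x => ((x.1 : UnitAddCircle), x.2.1))
    (by rintro x _ ⟨n, rfl⟩; simp [zAct])

theorem proj_mk (t : ℝ) (k₁ k₂ : K) : proj (Quot.mk _ (t, k₁, k₂)) = ((t : UnitAddCircle), k₁) :=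
  rfl

theorem continuous_proj [TopologicalSpace K] : Continuous (proj (K := K)) :=
  continuous_quot_lift _ (by fun_prop)

theorem proj_surjective : Function.Surjective (proj (K := K)) := by
  rintro ⟨u, k⟩
  obtain ⟨t, rfl⟩ := QuotientAddGroup.mk_surjective u
  exact ⟨Quot.mk _ (t, k, 1), rfl⟩

theorem proj_act (d : bundleD K) (k : K) : proj (act d k) = proj d := by
  rcases d with ⟨t, k₁, k₂⟩
  rfl

theorem proj_eq_proj_iff (d d' : bundleD K) : proj d = proj d' ↔ ∃ k, act d k = d' := by
  refine ⟨fun h => ?_, fun ⟨k, hk⟩ => hk ▸ (proj_act d k).symm⟩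
  rcases d with ⟨t, k₁, k₂⟩
  rcases d' with ⟨t', k₁', k₂'⟩
  rw [proj_mk, proj_mk, Prod.mk.injEq] at h
  obtain ⟨ht, rfl⟩ := h
  obtain ⟨n, rfl⟩ := UnitAddCircle.coe_eq_coe_iff.mp ht
  refine ⟨k₂⁻¹ * (k₁ ^ n)⁻¹ * k₂', mk_eq_mk_iff.mpr ⟨n, ?_⟩⟩
  simp only [zAct, Prod.mk.injEq, true_and]
  group

theorem mk_image_Icc_prod_univ :
    (Quot.mk _ '' Set.Icc (0 : ℝ) 1 ×ˢ Set.univ : Set (bundleD K)) = Set.univ := by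
  refine Set.eq_univ_of_forall fun d => ?_
  rcases d with ⟨t, k₁, k₂⟩
  refine ⟨(Int.fract t, k₁, k₁ ^ (-⌊t⌋) * k₂),
    ⟨⟨Int.fract_nonneg t, (Int.fract_lt_one t).le⟩, trivial⟩, mk_eq_mk_iff.mpr ⟨⌊t⌋, ?_⟩⟩
  simp only [zAct, Int.fract_add_floor, ← mul_assoc, ← zpow_add, add_neg_cancel, zpow_zero,
    one_mul]

instance [TopologicalSpace K] [CompactSpace K] : CompactSpace (bundleD K) where
  isCompact_univ := mk_image_Icc_prod_univ (K := K) ▸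
    (isCompact_Icc.prod isCompact_univ).image continuous_quot_mk

end bundleD

/-- `[t, k₁, k₂] · k = [t, k₁, k₂ k]` is a well-defined, continuous, free right action
of `K` on `D`; the map `p : D → (ℝ/ℤ) × K`, `[t, k₁, k₂] ↦ ([t], k₁)`, is well defined,
continuous, surjective and invariant; and the induced map `D/K → (ℝ/ℤ) × K` is a
homeomorphism. -/
theorem stmt4 (K : Type*) [Group K] [TopologicalSpace K] [IsTopologicalGroup K]
    [CompactSpace K] [T2Space K] :
    ∃ act : bundleD K → K → bundleD K,
      (∀ (t : ℝ) (k₁ k₂ k : K),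
        act (Quot.mk _ (t, k₁, k₂)) k = Quot.mk _ (t, k₁, k₂ * k)) ∧
      Continuous (fun z : bundleD K × K => act z.1 z.2) ∧
      (∀ d, act d 1 = d) ∧
      (∀ d k k', act (act d k) k' = act d (k * k')) ∧
      (∀ d k, act d k = d → k = 1) ∧
      ∃ p : bundleD K → UnitAddCircle × K,
        (∀ (t : ℝ) (k₁ k₂ : K),
          p (Quot.mk _ (t, k₁, k₂)) = ((t : UnitAddCircle), k₁)) ∧
        Continuous p ∧ Function.Surjective p ∧
        (∀ d k, p (act d k) = p d) ∧
        ∃ h : Quot (fun d d' : bundleD K => ∃ k : K, act d k = d') ≃ₜ UnitAddCircle × K,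
          ∀ d : bundleD K, h (Quot.mk _ d) = p d :=
  ⟨bundleD.act, bundleD.act_mk, bundleD.continuous_act, bundleD.act_one, bundleD.act_act,
    fun _ _ => bundleD.eq_one_of_act_eq,
    bundleD.proj, bundleD.proj_mk, bundleD.continuous_proj, bundleD.proj_surjective,
    bundleD.proj_act,
    exists_homeomorph_quot_of_fiber_iff bundleD.continuous_proj bundleD.proj_surjective
      bundleD.proj_eq_proj_iff⟩
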